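/- arXiv:2605.14222 — 4 statements merged into one kernel-verified Lean document; each statement's English description precedes it below -/
import Mathlib

section
/- Let K be an (n+m)×(n+m) real symmetric positive semidefinite matrix partitioned into blocks K₁₁ (n×n), K₁₂, K₂₁, K₂₂ (m×m), let σ² > 0, and define M = K + σ² I. Let N be the block matrix with top-left block (K₁₁ + σ² Iₙ)⁻¹ and zeros elsewhere. Then for any (n+m)×r matrix V, the matrix Vᵀ M⁻¹ V - Vᵀ N V is positive semidefinite. -/
open Matrix

/-! Since `M⁻¹ - N = M⁻¹ (M - M N M) M⁻¹`, it suffices that `M - M N M` is positive semidefinite.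
A block computation shows that `M - M N M` vanishes outside its lower right block, which is the
Schur complement of `K₁₁ + σ² I` in `M`, and this Schur complement is positive semidefinite
because `M` is. -/

namespace Matrix

variable {m n : Type*} [Fintype m] [Fintype n] [DecidableEq n]

theorem fromBlocks_sub_mul_fromBlocks_inv_zero_mul [DecidableEq m] {R : Type*} [CommRing R]
    (A : Matrix m m R) [Invertible A] (B : Matrix m n R) (C : Matrix n m R) (D : Matrix n n R) :
    fromBlocks A B C D - fromBlocks A B C D * fromBlocks A⁻¹ 0 0 0 * fromBlocks A B C D =
      fromBlocks 0 0 0 (D - C * A⁻¹ * B) := by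
  rw [fromBlocks_multiply, fromBlocks_multiply, sub_eq_iff_eq_add, fromBlocks_add]
  simp

theorem PosSemidef.fromBlocks_zero_zero_zero {R : Type*} [Ring R] [PartialOrder R] [StarRing R]
    {S : Matrix n n R} (hS : S.PosSemidef) :
    (fromBlocks (0 : Matrix m m R) 0 0 S).PosSemidef := by
  have := hS.conjTranspose_mul_mul_same (fromCols (0 : Matrix n m R) (1 : Matrix n n R))
  rw [conjTranspose_fromCols_eq_fromRows_conjTranspose, fromRows_mul, fromRows_mul_fromCols] at this
  simpa only [conjTranspose_zero, conjTranspose_one, Matrix.zero_mul, Matrix.mul_zero,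
    Matrix.one_mul, Matrix.mul_one] using this

theorem PosSemidef.inv_sub_of_sub_mul_mul {R : Type*} [CommRing R] [PartialOrder R] [StarRing R]
    {M N : Matrix n n R} (hM : M.IsHermitian) [Invertible M] (h : (M - M * N * M).PosSemidef) :
    (M⁻¹ - N).PosSemidef := by
  have key : M⁻¹ - N = (M⁻¹)ᴴ * (M - M * N * M) * M⁻¹ := by
    rw [hM.inv.eq, Matrix.mul_sub, Matrix.sub_mul]
    simp [Matrix.mul_assoc]
  rw [key]
  exact h.conjTranspose_mul_mul_same _

theorem PosDef.posSemidef_inv_sub_fromBlocks_inv_zero [DecidableEq m] {K : Type*} [Field K] [PartialOrder K]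
    [StarRing K] [StarOrderedRing K] {A : Matrix m m K} {B : Matrix m n K} {D : Matrix n n K}
    (hM : (fromBlocks A B Bᴴ D).PosDef) :
    ((fromBlocks A B Bᴴ D)⁻¹ - fromBlocks A⁻¹ 0 0 0).PosSemidef := by
  have hA : A.PosDef := hM.submatrix Sum.inl_injective
  have := hA.isUnit.invertible
  have := hM.isUnit.invertible
  refine PosSemidef.inv_sub_of_sub_mul_mul hM.isHermitian ?_
  rw [fromBlocks_sub_mul_fromBlocks_inv_zero_mul]
  exact ((PosDef.fromBlocks₁₁ B D hA).mp hM.posSemidef).fromBlocks_zero_zero_zero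

end Matrix

theorem stmt_3 {n m r : ℕ}
    (K₁₁ : Matrix (Fin n) (Fin n) ℝ) (K₁₂ : Matrix (Fin n) (Fin m) ℝ)
    (K₂₁ : Matrix (Fin m) (Fin n) ℝ) (K₂₂ : Matrix (Fin m) (Fin m) ℝ)
    (hK : (fromBlocks K₁₁ K₁₂ K₂₁ K₂₂).PosSemidef)
    (σ2 : ℝ) (hσ : 0 < σ2)
    (M : Matrix (Fin n ⊕ Fin m) (Fin n ⊕ Fin m) ℝ)
    (hM : M = fromBlocks K₁₁ K₁₂ K₂₁ K₂₂ + σ2 • 1)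
    (N : Matrix (Fin n ⊕ Fin m) (Fin n ⊕ Fin m) ℝ)
    (hN : N = fromBlocks (K₁₁ + σ2 • 1)⁻¹ 0 0 0)
    (V : Matrix (Fin n ⊕ Fin m) (Fin r) ℝ) :
    (Vᵀ * M⁻¹ * V - Vᵀ * N * V).PosSemidef := by
  have hK₂₁ : K₂₁ = K₁₂ᴴ := (isHermitian_fromBlocks_iff.mp hK.isHermitian).2.1.symm
  have hM_blocks : M = fromBlocks (K₁₁ + σ2 • 1) K₁₂ K₁₂ᴴ (K₂₂ + σ2 • 1) := by
    rw [hM, hK₂₁, ← fromBlocks_one, fromBlocks_smul, fromBlocks_add]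
    simp
  have hM_posDef : M.PosDef := hM ▸ PosDef.posSemidef_add hK (.smul .one hσ)
  rw [hM_blocks] at hM_posDef
  have h := (hM_posDef.posSemidef_inv_sub_fromBlocks_inv_zero).conjTranspose_mul_mul_same V
  rwa [← hM_blocks, ← hN, conjTranspose_eq_transpose_of_trivial, Matrix.mul_sub,
    Matrix.sub_mul] at h
end

section
/- Let K_f be an (n_j + n_k + n')×(n_j + n_k + n') real symmetric positive semidefinite matrix with diagonal blocks K_jj, K_kk, K_{k'k'} and off-diagonal blocks K_jk, K_jk', K_kk' (and transposes), and let σ_k² > 0. Define F_cc = K_jj - K_jk (K_kk + σ_k² I)⁻¹ K_kj and F = K_jj - (K_jk, K_jk') [ (K_kk, K_kk'; K_k'k, K_k'k') + σ_k² I ]⁻¹ (K_jk, K_jk')ᵀ. Then F_cc - F is positive semidefinite. -/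
open Matrix
open scoped ComplexOrder

/-! For `B` positive definite and `G = Pᴴ B P` invertible, `Q = B⁻¹ - P G⁻¹ Pᴴ` is Hermitian and
satisfies `Pᴴ B Q = 0`, hence `Q B Q = Q` and `Q = Qᴴ B Q` is positive semidefinite: compressing
`B` to a subspace can only shrink `B⁻¹`. Taking for `B` the regularised covariance of all controls
and for `P` the inclusion of the concurrent ones, then conjugating by the cross-covariance
`(K_jk, K_jk')`, gives `F_cc - F ⪰ 0`. -/

namespace Matrix

variable {𝕜 : Type*} [RCLike 𝕜]

theorem PosDef.posSemidef_inv_sub_mul_inv_mul {n m : Type*} [Fintype n] [Fintype m] [DecidableEq n]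
    [DecidableEq m] {B : Matrix n n 𝕜} (hB : B.PosDef) (P : Matrix n m 𝕜)
    (hG : IsUnit (Pᴴ * B * P).det) : (B⁻¹ - P * (Pᴴ * B * P)⁻¹ * Pᴴ).PosSemidef := by
  set G := Pᴴ * B * P
  set Q := B⁻¹ - P * G⁻¹ * Pᴴ
  have hBdet : IsUnit B.det := hB.isUnit.map detMonoidHom
  have hQ : Qᴴ = Q := by
    have hG : G.IsHermitian := (hB.posSemidef.conjTranspose_mul_mul_same P).isHermitian
    simp only [Q, conjTranspose_sub, conjTranspose_mul, conjTranspose_conjTranspose,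
      hB.isHermitian.inv.eq, hG.inv.eq, Matrix.mul_assoc]
  have hPBQ : Pᴴ * B * Q = 0 := by
    rw [Matrix.mul_sub, Matrix.mul_assoc, mul_nonsing_inv _ hBdet, ← Matrix.mul_assoc,
      ← Matrix.mul_assoc, mul_nonsing_inv _ hG, Matrix.one_mul, Matrix.mul_one, sub_self]
  have hQBQ : Qᴴ * B * Q = Q := calc
    Qᴴ * B * Q = B⁻¹ * B * Q - P * G⁻¹ * (Pᴴ * B * Q) := by
      rw [hQ, Matrix.sub_mul, Matrix.sub_mul]; simp only [Matrix.mul_assoc]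
    _ = Q := by rw [nonsing_inv_mul _ hBdet, hPBQ, Matrix.one_mul, Matrix.mul_zero, sub_zero]
  exact hQBQ ▸ hB.posSemidef.conjTranspose_mul_mul_same Q

theorem PosDef.posSemidef_fromCols_mul_inv_mul_sub {l ι κ : Type*} [Fintype l] [Fintype ι]
    [Fintype κ] [DecidableEq ι] [DecidableEq κ] {A : Matrix ι ι 𝕜} {B : Matrix ι κ 𝕜}
    {C : Matrix κ ι 𝕜} {D : Matrix κ κ 𝕜} (hABCD : (fromBlocks A B C D).PosDef) (M₁ : Matrix l ι 𝕜)
    (M₂ : Matrix l κ 𝕜) :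
    (fromCols M₁ M₂ * (fromBlocks A B C D)⁻¹ * (fromCols M₁ M₂)ᴴ - M₁ * A⁻¹ * M₁ᴴ).PosSemidef := by
  set P : Matrix (ι ⊕ κ) ι 𝕜 := fromRows 1 0
  have hPAP : Pᴴ * fromBlocks A B C D * P = A := by
    simp [P, conjTranspose_fromRows_eq_fromCols_conjTranspose, fromCols_mul_fromBlocks,
      fromCols_mul_fromRows]
  have hMP : fromCols M₁ M₂ * P = M₁ := by simp [P, fromCols_mul_fromRows]
  have hA : A.PosDef := by
    convert hABCD.submatrix Sum.inl_injective
    ext; simp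
  have hAdet : IsUnit (Pᴴ * fromBlocks A B C D * P).det := by
    rw [hPAP]; exact hA.isUnit.map detMonoidHom
  have hMPM : fromCols M₁ M₂ * (P * A⁻¹ * Pᴴ) * (fromCols M₁ M₂)ᴴ = M₁ * A⁻¹ * M₁ᴴ := by
    rw [← Matrix.mul_assoc, ← Matrix.mul_assoc, hMP, Matrix.mul_assoc _ Pᴴ, ← conjTranspose_mul,
      hMP]
  have hconj := (hABCD.posSemidef_inv_sub_mul_inv_mul P hAdet).mul_mul_conjTranspose_same
    (fromCols M₁ M₂)
  rwa [hPAP, Matrix.mul_sub, Matrix.sub_mul, hMPM] at hconj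

end Matrix

theorem fromBlocks_add_smul_one {R ι κ : Type*} [DecidableEq ι] [DecidableEq κ] [Semiring R]
    (A : Matrix ι ι R) (B : Matrix ι κ R) (C : Matrix κ ι R) (D : Matrix κ κ R) (c : R) :
    fromBlocks A B C D + c • 1 = fromBlocks (A + c • 1) B C (D + c • 1) := by
  rw [← fromBlocks_one, fromBlocks_smul, fromBlocks_add]; simp

theorem stmt_4 {nj nk n' : ℕ}
    (Kjj : Matrix (Fin nj) (Fin nj) ℝ)
    (Kjk : Matrix (Fin nj) (Fin nk) ℝ)
    (Kjk' : Matrix (Fin nj) (Fin n') ℝ)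
    (Kkk : Matrix (Fin nk) (Fin nk) ℝ)
    (Kkk' : Matrix (Fin nk) (Fin n') ℝ)
    (Kk'k' : Matrix (Fin n') (Fin n') ℝ)
    (hKf : (fromBlocks Kjj (fromCols Kjk Kjk')
        (fromRows Kjkᵀ Kjk'ᵀ)
        (fromBlocks Kkk Kkk' Kkk'ᵀ Kk'k')).PosSemidef)
    (σk2 : ℝ) (hσ : 0 < σk2)
    (Fcc F : Matrix (Fin nj) (Fin nj) ℝ)
    (hFcc : Fcc = Kjj - Kjk * (Kkk + σk2 • 1)⁻¹ * Kjkᵀ)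
    (hF : F = Kjj - fromCols Kjk Kjk' *
        (fromBlocks Kkk Kkk' Kkk'ᵀ Kk'k' + σk2 • 1)⁻¹ *
        (fromCols Kjk Kjk')ᵀ) :
    (Fcc - F).PosSemidef := by
  have hK : (fromBlocks Kkk Kkk' Kkk'ᵀ Kk'k').PosSemidef := by
    convert hKf.submatrix (Sum.inr : Fin nk ⊕ Fin n' → _)
    ext (i | i) (j | j) <;> simp
  have hKσ := PosDef.posSemidef_add hK (PosDef.one.smul hσ)
  rw [fromBlocks_add_smul_one] at hKσ
  have hcompress := hKσ.posSemidef_fromCols_mul_inv_mul_sub Kjk Kjk'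
  rw [hFcc, hF, sub_sub_sub_cancel_left, fromBlocks_add_smul_one]
  simpa [conjTranspose_eq_transpose_of_trivial] using hcompress
end

section
/- Let B₁ = K + σ² I + F with K, F symmetric positive semidefinite n×n matrices, σ² > 0. Then for every v ∈ ℝⁿ and every κ such that the 1+n matrix [[κ, vᵀ],[v, K]] is positive semidefinite, vᵀ B₁⁻¹ F B₁⁻¹ v ≤ κ - vᵀ B₁⁻¹ v. -/
/-!
With `w = B₁⁻¹ v`, the left side is `wᵀ F w` and `vᵀ B₁⁻¹ v = wᵀ B₁ w = wᵀ K w + σ² ‖w‖² + wᵀ F w`.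
Testing the augmented matrix against `(1, -w)` gives `2 vᵀ w ≤ κ + wᵀ K w`, and subtracting the
two yields `wᵀ F w ≤ wᵀ F w + σ² ‖w‖² ≤ κ - vᵀ w`.
-/

open Matrix

namespace Matrix

variable {m : Type*}

theorem PosSemidef.posDef_add_smul_one_add [DecidableEq m] {K F : Matrix m m ℝ}
    (hK : K.PosSemidef) (hF : F.PosSemidef) {σ : ℝ} (hσ : 0 < σ) :
    (K + σ • 1 + F).PosDef :=
  (PosDef.posSemidef_add hK (PosDef.one.smul hσ)).add_posSemidef hF

theorem dotProduct_mul_mul_mulVec_of_isHermitian [Fintype m] {A : Matrix m m ℝ}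
    (hA : A.IsHermitian) (F : Matrix m m ℝ) (v : m → ℝ) :
    v ⬝ᵥ (A * F * A) *ᵥ v = (A *ᵥ v) ⬝ᵥ F *ᵥ (A *ᵥ v) := by
  rw [← mulVec_mulVec, ← mulVec_mulVec, dotProduct_mulVec, ← mulVec_transpose,
    ← conjTranspose_eq_transpose_of_trivial, hA.eq]

theorem PosSemidef.two_mul_dotProduct_le_of_fromBlocks [Fintype m] {κ : ℝ} {v : m → ℝ}
    {K : Matrix m m ℝ}
    (h : (fromBlocks (κ • (1 : Matrix (Fin 1) (Fin 1) ℝ)) (of fun (_ : Fin 1) j => v j)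
      (of fun i (_ : Fin 1) => v i) K).PosSemidef) (w : m → ℝ) :
    2 * (v ⬝ᵥ w) ≤ κ + w ⬝ᵥ K *ᵥ w := by
  have hrow : (1 : Fin 1 → ℝ) ⬝ᵥ (of fun (_ : Fin 1) j => v j) *ᵥ w = v ⬝ᵥ w := by
    simp [mulVec, dotProduct]
  have hcol : (of fun i (_ : Fin 1) => v i) *ᵥ 1 = v := by
    ext; simp [mulVec, dotProduct]
  have := h.dotProduct_mulVec_nonneg (Sum.elim 1 (-w))
  simp only [star_trivial, fromBlocks_mulVec, sumElim_dotProduct_sumElim, Sum.elim_comp_inl,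
    Sum.elim_comp_inr, dotProduct_add, smul_mulVec, one_mulVec, dotProduct_smul, mulVec_neg,
    dotProduct_neg, neg_dotProduct, neg_neg, hrow, hcol, dotProduct_comm w v, one_dotProduct_one,
    Fintype.card_unique, Nat.cast_one, smul_eq_mul, mul_one] at this
  linarith

end Matrix

theorem stmt_12 {n : ℕ}
    (K F : Matrix (Fin n) (Fin n) ℝ)
    (hK : K.PosSemidef) (hF : F.PosSemidef)
    (σ2 : ℝ) (hσ : 0 < σ2)
    (B₁ : Matrix (Fin n) (Fin n) ℝ) (hB₁ : B₁ = K + σ2 • 1 + F)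
    (v : Fin n → ℝ) (κ : ℝ)
    (haug : (fromBlocks (κ • (1 : Matrix (Fin 1) (Fin 1) ℝ))
        (Matrix.of fun (_ : Fin 1) j => v j)
        (Matrix.of fun i (_ : Fin 1) => v i) K).PosSemidef) :
    v ⬝ᵥ (B₁⁻¹ * F * B₁⁻¹) *ᵥ v ≤ κ - v ⬝ᵥ B₁⁻¹ *ᵥ v := by
  have hB : B₁.PosDef := hB₁ ▸ hK.posDef_add_smul_one_add hF hσ
  have hBinv : B₁⁻¹.IsHermitian := hB.inv.isHermitian
  set w := B₁⁻¹ *ᵥ v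
  have hF_form : v ⬝ᵥ (B₁⁻¹ * F * B₁⁻¹) *ᵥ v = w ⬝ᵥ F *ᵥ w :=
    dotProduct_mul_mul_mulVec_of_isHermitian hBinv F v
  have hB_form : v ⬝ᵥ w = w ⬝ᵥ B₁ *ᵥ w := by
    rw [← dotProduct_mul_mul_mulVec_of_isHermitian hBinv, nonsing_inv_mul _ hB.det_pos.ne'.isUnit,
      one_mul]
  have hB_split : w ⬝ᵥ B₁ *ᵥ w = w ⬝ᵥ K *ᵥ w + σ2 * (w ⬝ᵥ w) + w ⬝ᵥ F *ᵥ w := by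
    simp only [hB₁, add_mulVec, smul_mulVec, one_mulVec, dotProduct_add, dotProduct_smul,
      smul_eq_mul]
  have hw : 0 ≤ σ2 * (w ⬝ᵥ w) := mul_nonneg hσ.le (dotProduct_self_star_nonneg w)
  linarith [haug.two_mul_dotProduct_le_of_fromBlocks w]
end

section
/- In a one-dimensional Gaussian conjugate setting, adding observations never increases posterior variance: if k̄(e,e) = k(e,e) - k(e,E) (k(E,E) + σ² I)⁻¹ k(E,e) denotes the scalar GP posterior variance at a point e based on design points E, and E ⊆ E' (E' obtained by appending additional points), then k̄'(e,e) ≤ k̄(e,e), where k̄' is defined analogously with E' and the same kernel k and noise σ² > 0. -/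
open Matrix

/-- A positive definite kernel: every Gram matrix is positive semidefinite. -/
def IsPDKernel {X : Type*} (k : X → X → ℝ) : Prop :=
  ∀ (n : ℕ) (x : Fin n → X), (Matrix.of fun i j => k (x i) (x j)).PosSemidef

/-!
For a positive definite `A`, `v ⬝ A⁻¹ v = max_x (2 v ⬝ x - x ⬝ A x)`, attained at `x = A⁻¹ v`.
Let `A'` be the regularised Gram matrix of the enlarged design, whose upper-left block is the
`A` of the original design. Padding the maximiser for `A` with zeros is admissible for `A'`
and gives the same value, so the subtracted term can only grow when points are added.
-/

namespace Matrix.PosDef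

variable {ι κ : Type*} [Fintype ι] [DecidableEq ι]

lemma mulVec_inv_mulVec {A : Matrix ι ι ℝ} (hA : A.PosDef) (v : ι → ℝ) :
    A *ᵥ (A⁻¹ *ᵥ v) = v := by
  rw [mulVec_mulVec, mul_nonsing_inv A ((isUnit_iff_isUnit_det A).mp hA.isUnit), one_mulVec]

lemma two_mul_dotProduct_sub_le_dotProduct_inv_mulVec {A : Matrix ι ι ℝ} (hA : A.PosDef)
    (v x : ι → ℝ) : 2 * (v ⬝ᵥ x) - x ⬝ᵥ (A *ᵥ x) ≤ v ⬝ᵥ (A⁻¹ *ᵥ v) := by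
  set w := A⁻¹ *ᵥ v
  have hAw : A *ᵥ w = v := hA.mulVec_inv_mulVec v
  have hsymm : ∀ y z : ι → ℝ, y ⬝ᵥ (A *ᵥ z) = z ⬝ᵥ (A *ᵥ y) := fun y z => by
    rw [dotProduct_mulVec, ← mulVec_transpose, ← conjTranspose_eq_transpose_of_trivial,
      hA.isHermitian.eq, dotProduct_comm]
  have hgap : (x - w) ⬝ᵥ (A *ᵥ (x - w)) =
      v ⬝ᵥ w - (2 * (v ⬝ᵥ x) - x ⬝ᵥ (A *ᵥ x)) := by
    rw [mulVec_sub, sub_dotProduct, dotProduct_sub, dotProduct_sub, hsymm w x, hAw,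
      dotProduct_comm x v, dotProduct_comm w v]
    ring
  have hnonneg : 0 ≤ (x - w) ⬝ᵥ (A *ᵥ (x - w)) := by
    simpa using hA.posSemidef.dotProduct_mulVec_nonneg (x - w)
  linarith

lemma dotProduct_inv_mulVec_toBlocks₁₁_le [Fintype κ] [DecidableEq κ]
    {A : Matrix (ι ⊕ κ) (ι ⊕ κ) ℝ} (hA : A.PosDef) (v : ι ⊕ κ → ℝ) :
    (v ∘ Sum.inl) ⬝ᵥ (A.toBlocks₁₁⁻¹ *ᵥ (v ∘ Sum.inl)) ≤ v ⬝ᵥ (A⁻¹ *ᵥ v) := by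
  set u := v ∘ Sum.inl
  set w := A.toBlocks₁₁⁻¹ *ᵥ u
  have hB : A.toBlocks₁₁.PosDef := hA.submatrix Sum.inl_injective
  have hlin : v ⬝ᵥ Sum.elim w 0 = u ⬝ᵥ w := by
    rw [← Sum.elim_comp_inl_inr v, sumElim_dotProduct_sumElim, dotProduct_zero, add_zero]
  have hquad : Sum.elim w 0 ⬝ᵥ (A *ᵥ Sum.elim w 0) = w ⬝ᵥ u := by
    rw [← fromBlocks_toBlocks A, fromBlocks_mulVec, sumElim_dotProduct_sumElim]
    simp only [Sum.elim_comp_inl, Sum.elim_comp_inr, mulVec_zero, add_zero, zero_dotProduct,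
      hB.mulVec_inv_mulVec u, w]
  have := hA.two_mul_dotProduct_sub_le_dotProduct_inv_mulVec v (Sum.elim w 0)
  rw [hlin, hquad, dotProduct_comm w u] at this
  linarith

end Matrix.PosDef

namespace IsPDKernel

variable {X ι : Type*} [Fintype ι] {k : X → X → ℝ}

lemma posSemidef_gram (hk : IsPDKernel k) (x : ι → X) :
    (of fun i j => k (x i) (x j)).PosSemidef := by
  convert (hk _ (x ∘ (Fintype.equivFin ι).symm)).submatrix (Fintype.equivFin ι)
  ext i j
  simp

lemma posDef_gram_add_smul_one [DecidableEq ι] (hk : IsPDKernel k) (x : ι → X) {σ2 : ℝ}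
    (hσ : 0 < σ2) : ((of fun i j => k (x i) (x j)) + σ2 • 1).PosDef :=
  PosDef.posSemidef_add (hk.posSemidef_gram x) (PosDef.one.smul hσ)

end IsPDKernel

theorem stmt_13 (k : ℝ → ℝ → ℝ) (hk : IsPDKernel k)
    (σ2 : ℝ) (hσ : 0 < σ2) {n m : ℕ}
    (E : Fin n → ℝ) (E' : Fin n ⊕ Fin m → ℝ)
    (hEE' : ∀ i, E' (Sum.inl i) = E i) (e : ℝ) :
    k e e - (fun i => k e (E' i)) ⬝ᵥ
        ((Matrix.of fun i j => k (E' i) (E' j)) + σ2 • 1)⁻¹ *ᵥ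
        (fun i => k e (E' i)) ≤
      k e e - (fun i => k e (E i)) ⬝ᵥ
        ((Matrix.of fun i j => k (E i) (E j)) + σ2 • 1)⁻¹ *ᵥ
        (fun i => k e (E i)) := by
  have hblock : ((of fun i j => k (E' i) (E' j)) + σ2 • (1 : Matrix _ _ ℝ)).toBlocks₁₁ =
      (of fun i j => k (E i) (E j)) + σ2 • 1 := by
    ext i j
    simp [toBlocks₁₁, hEE', one_apply]
  have hmono := (hk.posDef_gram_add_smul_one E' hσ).dotProduct_inv_mulVec_toBlocks₁₁_le
    (fun i => k e (E' i))
  simp only [hblock, Function.comp_def, hEE'] at hmono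
  linarith
end
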